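/- arXiv:2307.03675 — 2 statements merged into one kernel-verified Lean document; each statement's English description precedes it below -/
import Mathlib

section
/- Let Q(z,τ) be induced by a deterministic link τ(z) from density Q(z), and R(z|τ) a conditional density with supp R(·|τ) ⊇ supp Q(·|τ). Then −E_{Q(τ)}[ln Q(τ)] ≥ −E_{Q(z)}[ln (Q(z)/R(z|τ(z)))], i.e., the discrete entropy of the pushforward distribution is bounded below by the differential-entropy-type expression involving R. Equality holds when R(z|τ) = Q(z|τ). -/
open MeasureTheory
open scoped Classical

/-- Tractable lower bound on the entropy of the pushforward topology distribution: if
`Q(τ₀) = ∫ q(z) 𝟙[τ(z)=τ₀] dλ(z)` is induced by a density `q` and a deterministic link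
`τ`, and `R(·|τ₀)` are conditional densities with `supp R(·|τ₀) ⊇ supp Q(·|τ₀)`, then
`−∑_{τ₀} Q(τ₀) ln Q(τ₀) ≥ −∫ q(z) ln (q(z)/R(z|τ(z))) dλ(z)`, with equality when
`R(z|τ₀)` is the conditional density `Q(z|τ₀)`, i.e. `R(z|τ(z)) Q(τ(z)) = q(z)`. -/
theorem entropy_lower_bound
    {Z : Type*} [MeasurableSpace Z] (lam : Measure Z) [SigmaFinite lam]
    {T : Type*} [Countable T] [MeasurableSpace T] [MeasurableSingletonClass T]
    (τ : Z → T) (hτ : Measurable τ)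
    (q : Z → ℝ) (hqm : Measurable q) (hq0 : ∀ z, 0 ≤ q z)
    (hq1 : ∫ z, q z ∂lam = 1)
    (R : T → Z → ℝ) (hRm : ∀ t, Measurable (R t)) (hR0 : ∀ t z, 0 ≤ R t z)
    (hR1 : ∀ t, ∫ z, R t z ∂lam = 1)
    (Qτ : T → ℝ)
    (hQτ : ∀ t, Qτ t = ∫ z, q z * (if τ z = t then (1 : ℝ) else 0) ∂lam)
    (hsupp : ∀ z, 0 < q z → 0 < R (τ z) z)
    (hsum : Summable (fun t => Qτ t * |Real.log (Qτ t)|))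
    (hint : Integrable (fun z => q z * Real.log (q z / R (τ z) z)) lam) :
    (-∑' t, Qτ t * Real.log (Qτ t)) ≥
        -∫ z, q z * Real.log (q z / R (τ z) z) ∂lam ∧
      ((∀ z, R (τ z) z * Qτ (τ z) = q z) →
        (-∑' t, Qτ t * Real.log (Qτ t)) =
          -∫ z, q z * Real.log (q z / R (τ z) z) ∂lam) := by
  classical
  set S : T → Set Z := fun t => τ ⁻¹' {t} with hSdef
  have hSmeas : ∀ t, MeasurableSet (S t) := fun t => hτ (measurableSet_singleton t)
  have hSdisj : Pairwise (Function.onFun Disjoint S) := by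
    intro a b hab
    simp only [Function.onFun, Set.disjoint_left]
    intro z hza hzb
    exact hab ((Set.mem_preimage.mp hza).symm.trans (Set.mem_preimage.mp hzb))
  have hSunion : (⋃ t, S t) = Set.univ := by
    ext z; simp [hSdef]
  have hqint : Integrable q lam := by
    by_contra h
    rw [integral_undef h] at hq1; exact one_ne_zero hq1.symm
  have hRint : ∀ t, Integrable (R t) lam := by
    intro t
    by_contra h
    have := hR1 t
    rw [integral_undef h] at this; exact one_ne_zero this.symm
  have hQτ' : ∀ t, Qτ t = ∫ z in S t, q z ∂lam := by
    intro t
    rw [hQτ t, ← integral_indicator (hSmeas t)]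
    congr 1; ext z
    by_cases h : τ z = t <;> simp [Set.indicator_apply, hSdef, h]
  have hQ0 : ∀ t, 0 ≤ Qτ t := by
    intro t
    rw [hQτ' t]
    exact setIntegral_nonneg (hSmeas t) (fun z _ => hq0 z)
  have hHS : HasSum (fun t => ∫ z in S t, q z * Real.log (q z / R (τ z) z) ∂lam)
      (∫ z, q z * Real.log (q z / R (τ z) z) ∂lam) := by
    have h := hasSum_integral_iUnion (μ := lam) hSmeas hSdisj
      (by rw [hSunion]; exact hint.integrableOn)
    rwa [hSunion, setIntegral_univ] at h
  have key : ∀ t, Qτ t * Real.log (Qτ t) ≤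
      ∫ z in S t, q z * Real.log (q z / R (τ z) z) ∂lam := by
    intro t
    have hfi : IntegrableOn (fun z => q z * Real.log (q z / R (τ z) z)) (S t) lam :=
      hint.integrableOn
    have hqi : IntegrableOn q (S t) lam := hqint.integrableOn
    rcases eq_or_lt_of_le (hQ0 t) with hm | hm
    · have hz0 : (∫ z in S t, q z ∂lam) = 0 := (hm.trans (hQτ' t)).symm
      have hq0' : q =ᵐ[lam.restrict (S t)] 0 := by
        rwa [← setIntegral_eq_zero_iff_of_nonneg_ae
          (Filter.Eventually.of_forall (fun z => hq0 z)) hqi]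
      have hfz : (fun z => q z * Real.log (q z / R (τ z) z)) =ᵐ[lam.restrict (S t)] 0 := by
        filter_upwards [hq0'] with z hz
        simp [hz]
      rw [integral_congr_ae hfz, ← hm]
      simp
    · set m := Qτ t with hmdef
      have hRle : ∫ z in S t, R t z ∂lam ≤ 1 := by
        rw [← hR1 t]
        exact setIntegral_le_integral (hRint t)
          (Filter.Eventually.of_forall (fun z => hR0 t z))
      have hpt : ∀ z ∈ S t,
          q z - R t z * m ≤ q z * Real.log (q z / R (τ z) z) - q z * Real.log m := by
        intro z hz
        have hzt : τ z = t := Set.mem_preimage.mp hz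
        rcases eq_or_lt_of_le (hq0 z) with hq | hq
        · have h1 : 0 ≤ R t z * m := mul_nonneg (hR0 t z) hm.le
          rw [← hq]
          simpa using h1
        · have hR : 0 < R (τ z) z := hsupp z hq
          have hx : 0 < R (τ z) z * m / q z := by positivity
          have hlog := Real.log_le_sub_one_of_pos hx
          rw [Real.log_div (by positivity) hq.ne', Real.log_mul hR.ne' hm.ne'] at hlog
          have h2 : Real.log (q z / R (τ z) z) = Real.log (q z) - Real.log (R (τ z) z) :=
            Real.log_div hq.ne' hR.ne'
          rw [← hzt, h2]
          have h3 := mul_le_mul_of_nonneg_left hlog hq.le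
          have h4 : q z * (R (τ z) z * m / q z - 1) = R (τ z) z * m - q z := by
            field_simp
          nlinarith [h3, h4]
      have hmono : ∫ z in S t, (q z - R t z * m) ∂lam
          ≤ ∫ z in S t, (q z * Real.log (q z / R (τ z) z) - q z * Real.log m) ∂lam :=
        setIntegral_mono_on (hqi.sub (((hRint t).integrableOn).mul_const m))
          (hfi.sub (hqi.mul_const _)) (hSmeas t) hpt
      have h1 : ∫ z in S t, (q z - R t z * m) ∂lam
          = m - (∫ z in S t, R t z ∂lam) * m := by
        rw [integral_sub hqi (((hRint t).integrableOn).mul_const m),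
          integral_mul_const, ← hQτ' t]
      have h2 : ∫ z in S t, (q z * Real.log (q z / R (τ z) z) - q z * Real.log m) ∂lam
          = (∫ z in S t, q z * Real.log (q z / R (τ z) z) ∂lam) - m * Real.log m := by
        rw [integral_sub hfi (hqi.mul_const _), integral_mul_const, ← hQτ' t]
      rw [h1, h2] at hmono
      nlinarith [hmono, hRle, hm]
  have habs : (fun t => |Qτ t * Real.log (Qτ t)|) = fun t => Qτ t * |Real.log (Qτ t)| := by
    funext t; rw [abs_mul, abs_of_nonneg (hQ0 t)]
  have hsumL : Summable (fun t => Qτ t * Real.log (Qτ t)) :=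
    Summable.of_abs (habs ▸ hsum)
  constructor
  · have hle : ∑' t, Qτ t * Real.log (Qτ t)
        ≤ ∫ z, q z * Real.log (q z / R (τ z) z) ∂lam := by
      rw [← hHS.tsum_eq]
      exact Summable.tsum_le_tsum key hsumL hHS.summable
    exact neg_le_neg hle
  · intro hEq
    have keyeq : ∀ t, ∫ z in S t, q z * Real.log (q z / R (τ z) z) ∂lam
        = Qτ t * Real.log (Qτ t) := by
      intro t
      have heq : ∀ z ∈ S t,
          q z * Real.log (q z / R (τ z) z) = q z * Real.log (Qτ t) := by
        intro z hz
        have hzt : τ z = t := Set.mem_preimage.mp hz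
        rcases eq_or_lt_of_le (hq0 z) with hq | hq
        · rw [← hq]; ring
        · have hR : 0 < R (τ z) z := hsupp z hq
          have hq' : q z = R (τ z) z * Qτ t := by rw [← hzt]; exact (hEq z).symm
          rw [hq', mul_comm (R (τ z) z) (Qτ t), mul_div_assoc, div_self hR.ne', mul_one]
      rw [setIntegral_congr_fun (hSmeas t) heq, integral_mul_const, ← hQτ' t]
    have : ∑' t, Qτ t * Real.log (Qτ t)
        = ∫ z, q z * Real.log (q z / R (τ z) z) ∂lam := by
      rw [← hHS.tsum_eq]
      exact tsum_congr fun t => (keyeq t).symm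
    rw [this]
end

section
/- Let z ∼ Q_θ be reparameterizable as z = h_θ(ε), ε ∼ p with p independent of θ and h differentiable, and let s : Z → ℝ be differentiable. Then E_ε[∇_θ s(h_θ(ε))] = ∇_θ E_{z∼Q_θ}[s(z)] = E_{z∼Q_θ}[∇_θ ln Q_θ(z) · s(z)] (under interchange of differentiation and integration), so the LAX estimator ĝ = ∇_θ ln Q_θ(z)·(f(z) − s(z)) + ∇_θ s(h_θ(ε)) is an unbiased estimator of ∇_θ E_{Q_θ}[f(z)]. -/
open MeasureTheory

/-- Unbiasedness of the LAX estimator: if `z ∼ Q_θ` (density `q θ` w.r.t. `lam`) is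
reparameterizable as `z = h θ ε`, `ε ∼ p` with `p` independent of `θ`, and `s` is a
differentiable surrogate, then (under interchange of differentiation and integration)
`E_ε[∇_θ s(h_θ(ε))] = ∇_θ E_{Q_θ}[s] = E_{Q_θ}[∇_θ ln q_θ(z) · s(z)]`, and hence the
LAX estimator `∇_θ ln q_θ(z)(f(z) − s(z)) + ∇_θ s(h_θ(ε))` is an unbiased estimator of
`∇_θ E_{Q_θ}[f]`, in every direction `v`. -/
theorem lax_unbiased
    {Θ Ωe Z : Type*} [NormedAddCommGroup Θ] [NormedSpace ℝ Θ]
    [MeasurableSpace Ωe] [MeasurableSpace Z]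
    (p : Measure Ωe) [IsProbabilityMeasure p] (lam : Measure Z) [SigmaFinite lam]
    (h : Θ → Ωe → Z) (q : Θ → Z → ℝ) (s f : Z → ℝ) (θ : Θ)
    (hpos : ∀ (θ' : Θ) (z : Z), 0 < q θ' z)
    (hnorm : ∀ θ' : Θ, ∫ z, q θ' z ∂lam = 1)
    (hdiffq : ∀ z, DifferentiableAt ℝ (fun θ' => q θ' z) θ)
    (hdiffs : ∀ ε, DifferentiableAt ℝ (fun θ' => s (h θ' ε)) θ)
    (hmap_s : ∀ θ' : Θ, ∫ ε, s (h θ' ε) ∂p = ∫ z, q θ' z * s z ∂lam)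
    (hswap_s : ∀ v : Θ,
      ∫ z, fderiv ℝ (fun θ' => q θ' z) θ v * s z ∂lam =
        fderiv ℝ (fun θ' => ∫ z, q θ' z * s z ∂lam) θ v)
    (hswap_f : ∀ v : Θ,
      ∫ z, fderiv ℝ (fun θ' => q θ' z) θ v * f z ∂lam =
        fderiv ℝ (fun θ' => ∫ z, q θ' z * f z ∂lam) θ v)
    (hswap_h : ∀ v : Θ,
      ∫ ε, fderiv ℝ (fun θ' => s (h θ' ε)) θ v ∂p =
        fderiv ℝ (fun θ' => ∫ ε, s (h θ' ε) ∂p) θ v)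
    (hint_s : ∀ v : Θ, Integrable
      (fun z => q θ z * fderiv ℝ (fun θ' => Real.log (q θ' z)) θ v * s z) lam)
    (hint_f : ∀ v : Θ, Integrable
      (fun z => q θ z * fderiv ℝ (fun θ' => Real.log (q θ' z)) θ v * f z) lam) :
    ∀ v : Θ,
      (∫ ε, fderiv ℝ (fun θ' => s (h θ' ε)) θ v ∂p =
        fderiv ℝ (fun θ' => ∫ z, q θ' z * s z ∂lam) θ v) ∧
      (fderiv ℝ (fun θ' => ∫ z, q θ' z * s z ∂lam) θ v =
        ∫ z, q θ z * fderiv ℝ (fun θ' => Real.log (q θ' z)) θ v * s z ∂lam) ∧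
      ((∫ z, q θ z * fderiv ℝ (fun θ' => Real.log (q θ' z)) θ v * (f z - s z) ∂lam)
          + ∫ ε, fderiv ℝ (fun θ' => s (h θ' ε)) θ v ∂p =
        fderiv ℝ (fun θ' => ∫ z, q θ' z * f z ∂lam) θ v) := by
  intro v
  -- key: q θ z * fderiv log (q · z) θ v = fderiv (q · z) θ v
  have hkey : ∀ z, q θ z * fderiv ℝ (fun θ' => Real.log (q θ' z)) θ v
      = fderiv ℝ (fun θ' => q θ' z) θ v := by
    intro z
    have hlog : HasFDerivAt (fun θ' => Real.log (q θ' z))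
        ((q θ z)⁻¹ • fderiv ℝ (fun θ' => q θ' z) θ) θ :=
      ((hdiffq z).hasFDerivAt).log (ne_of_gt (hpos θ z))
    rw [hlog.fderiv]
    simp only [ContinuousLinearMap.smul_apply, smul_eq_mul]
    rw [mul_comm ((q θ z)⁻¹)]
    field_simp
    rw [mul_comm, mul_div_assoc, div_self (ne_of_gt (hpos θ z)), mul_one]
  have h1 : ∫ ε, fderiv ℝ (fun θ' => s (h θ' ε)) θ v ∂p =
      fderiv ℝ (fun θ' => ∫ z, q θ' z * s z ∂lam) θ v := by
    rw [hswap_h v]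
    have : (fun θ' => ∫ (ε : Ωe), s (h θ' ε) ∂p) = fun θ' => ∫ (z : Z), q θ' z * s z ∂lam :=
      funext hmap_s
    rw [this]
  have h2 : fderiv ℝ (fun θ' => ∫ z, q θ' z * s z ∂lam) θ v =
      ∫ z, q θ z * fderiv ℝ (fun θ' => Real.log (q θ' z)) θ v * s z ∂lam := by
    rw [← hswap_s v]
    exact integral_congr_ae (Filter.Eventually.of_forall fun z => by
      simp only []; rw [← hkey z])
  refine ⟨h1, h2, ?_⟩
  have hsplit : ∀ z, q θ z * fderiv ℝ (fun θ' => Real.log (q θ' z)) θ v * (f z - s z)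
      = q θ z * fderiv ℝ (fun θ' => Real.log (q θ' z)) θ v * f z
        - q θ z * fderiv ℝ (fun θ' => Real.log (q θ' z)) θ v * s z := fun z => by ring
  have : (∫ z, q θ z * fderiv ℝ (fun θ' => Real.log (q θ' z)) θ v * (f z - s z) ∂lam)
      = (∫ z, q θ z * fderiv ℝ (fun θ' => Real.log (q θ' z)) θ v * f z ∂lam)
        - ∫ z, q θ z * fderiv ℝ (fun θ' => Real.log (q θ' z)) θ v * s z ∂lam := by
    rw [← integral_sub (hint_f v) (hint_s v)]
    exact integral_congr_ae (Filter.Eventually.of_forall fun z => hsplit z)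
  rw [this, h1, ← h2]
  have hf : (∫ z, q θ z * fderiv ℝ (fun θ' => Real.log (q θ' z)) θ v * f z ∂lam)
      = fderiv ℝ (fun θ' => ∫ z, q θ' z * f z ∂lam) θ v := by
    rw [← hswap_f v]
    exact integral_congr_ae (Filter.Eventually.of_forall fun z => by
      simp only []; rw [hkey z])
  rw [hf]; ring
end
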